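/- Let C be a Hermitian n×n complex matrix and P an orthogonal projection (P² = P = P†). Then ‖PC‖₁ = ‖P·|C|‖₁ ≤ √(tr(P·|C|)) · √(tr|C|), where |C| = √(C²) and ‖M‖₁ denotes the trace norm. -/

import Mathlib

open scoped ComplexOrder

/-- The trace norm of a complex matrix: `tr √(M† M)`. -/
noncomputable def traceNorm {n : ℕ} (M : Matrix (Fin n) (Fin n) ℂ) : ℝ :=
  (((Matrix.posSemidef_conjTranspose_mul_self M).1.eigenvectorUnitary.1 *
    Matrix.diagonal (fun i => ((Real.sqrt ((Matrix.posSemidef_conjTranspose_mul_self M).1.eigenvalues i) : ℝ) : ℂ)) *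
    (star (Matrix.posSemidef_conjTranspose_mul_self M).1.eigenvectorUnitary : Matrix (Fin n) (Fin n) ℂ)).trace).re

/-- The absolute value `|C| = √(C† C)` of a matrix. -/
noncomputable def matrixAbs {n : ℕ} (C : Matrix (Fin n) (Fin n) ℂ) :
    Matrix (Fin n) (Fin n) ℂ :=
  ((Matrix.posSemidef_conjTranspose_mul_self C).1.eigenvectorUnitary.1 *
    Matrix.diagonal (fun i => ((Real.sqrt ((Matrix.posSemidef_conjTranspose_mul_self C).1.eigenvalues i) : ℝ) : ℂ)) *
    (star (Matrix.posSemidef_conjTranspose_mul_self C).1.eigenvectorUnitary : Matrix (Fin n) (Fin n) ℂ))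

/-!
Since `C` is Hermitian, `(PC)(PC)† = P C² P = (P|C|)(P|C|)†`. As `M†M` and `MM†` have the same
characteristic polynomial, `(PC)†(PC)` and `(P|C|)†(P|C|)` have the same eigenvalues, hence `PC`
and `P|C|` have the same trace norm.

For the bound, write `P|C| = (P|C|^½) |C|^½` and use the Hölder inequality
`‖AB‖₁ ≤ ‖A‖₂ ‖B‖₂`: for `M = AB` there is a contraction `W` with `W†M = |M|`, so
`‖M‖₁ = tr(A · BW†)`, which Cauchy–Schwarz for the Hilbert–Schmidt inner product bounds by
`‖A‖₂ ‖BW†‖₂ ≤ ‖A‖₂ ‖B‖₂`. Finally `‖P|C|^½‖₂² = tr(|C|^½ P |C|^½) = tr(P|C|)` since `P² = P = P†`.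
-/

open scoped MatrixOrder InnerProductSpace
open Matrix

namespace Matrix

variable {𝕜 ι : Type*} [RCLike 𝕜] [Fintype ι]

lemma re_trace_mul_le {m n : Type*} [Fintype m] [Fintype n] (A : Matrix m n 𝕜)
    (B : Matrix n m 𝕜) :
    RCLike.re (A * B).trace ≤ √(RCLike.re (A * Aᴴ).trace) * √(RCLike.re (Bᴴ * B).trace) := by
  have h (X Y : Matrix n m 𝕜) :
      (Xᴴ * Y).trace = ⟪WithLp.toLp 2 (vec X), WithLp.toLp 2 (vec Y)⟫_𝕜 := by
    rw [← star_vec_dotProduct_vec, EuclideanSpace.inner_toLp_toLp, dotProduct_comm]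
  have := re_inner_le_norm (𝕜 := 𝕜) (WithLp.toLp 2 (vec Aᴴ)) (WithLp.toLp 2 (vec B))
  rwa [norm_eq_sqrt_re_inner (𝕜 := 𝕜), norm_eq_sqrt_re_inner (𝕜 := 𝕜), ← h, ← h, ← h,
    conjTranspose_conjTranspose] at this

lemma re_trace_le_of_le {A B : Matrix ι ι 𝕜} (h : A ≤ B) :
    RCLike.re A.trace ≤ RCLike.re B.trace :=
  (RCLike.le_iff_re_im.mp (OrderHomClass.mono (tracePositiveLinearMap ι ℝ 𝕜) h)).1

variable [DecidableEq ι]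

lemma cfcAbs_eq_cfc_sqrt (M : Matrix ι ι 𝕜) : CFC.abs M = cfc Real.sqrt (Mᴴ * M) := by
  rw [CFC.abs, CFC.sqrt_eq_real_sqrt _ (star_mul_self_nonneg M), cfcₙ_eq_cfc,
    star_eq_conjTranspose]

lemma IsHermitian.trace_cfc {A : Matrix ι ι 𝕜} (hA : A.IsHermitian) (f : ℝ → ℝ) :
    (cfc f A).trace = ∑ i, (f (hA.eigenvalues i) : 𝕜) := by
  rw [hA.cfc_eq, IsHermitian.cfc, Unitary.conjStarAlgAut_apply, trace_mul_cycle,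
    Unitary.coe_star_mul_self, one_mul, trace_diagonal]
  rfl

lemma trace_cfcAbs_eq_of_mul_conjTranspose_eq {M N : Matrix ι ι 𝕜} (h : M * Mᴴ = N * Nᴴ) :
    (CFC.abs M).trace = (CFC.abs N).trace := by
  have hM := isHermitian_conjTranspose_mul_self M
  have hN := isHermitian_conjTranspose_mul_self N
  have heig : hM.eigenvalues = hN.eigenvalues :=
    (IsHermitian.eigenvalues_eq_eigenvalues_iff hM hN).mpr
      (by rw [charpoly_mul_comm, h, charpoly_mul_comm])
  rw [cfcAbs_eq_cfc_sqrt, cfcAbs_eq_cfc_sqrt, hM.trace_cfc, hN.trace_cfc, heig]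

/-- `W = M (M†M)^{-1/2}`, where the junk value `0⁻¹ = 0` turns `(√x)⁻¹` into a pseudo-inverse. -/
lemma exists_conjTranspose_mul_eq_cfcAbs (M : Matrix ι ι 𝕜) :
    ∃ W : Matrix ι ι 𝕜, Wᴴ * M = CFC.abs M ∧ Wᴴ * W ≤ 1 := by
  set H := Mᴴ * M
  have hH : IsSelfAdjoint H := isHermitian_conjTranspose_mul_self M
  have hcont (f : ℝ → ℝ) : ContinuousOn f (spectrum ℝ H) := finite_real_spectrum.continuousOn f
  set Y := cfc (fun x ↦ (√x)⁻¹) H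
  have hY : Yᴴ = Y := cfc_predicate (fun x : ℝ ↦ (√x)⁻¹) H
  have hYH : Y * H = CFC.abs M := by
    rw [cfcAbs_eq_cfc_sqrt]
    nth_rw 1 [← cfc_id' ℝ H hH]
    rw [← cfc_mul _ _ _ (hcont _) (hcont _)]
    congr 1
    funext x
    rw [inv_mul_eq_div, Real.div_sqrt]
  refine ⟨M * Y, by rw [conjTranspose_mul, hY, mul_assoc, hYH], ?_⟩
  rw [conjTranspose_mul, hY, ← mul_assoc, mul_assoc Y, hYH, cfcAbs_eq_cfc_sqrt,
    ← cfc_mul _ _ _ (hcont _) (hcont _)]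
  exact cfc_le_one _ _ fun x _ ↦ mul_inv_le_one

lemma re_trace_cfcAbs_mul_le (A B : Matrix ι ι 𝕜) :
    RCLike.re (CFC.abs (A * B)).trace ≤
      √(RCLike.re (Aᴴ * A).trace) * √(RCLike.re (Bᴴ * B).trace) := by
  obtain ⟨W, hWM, hWW⟩ := exists_conjTranspose_mul_eq_cfcAbs (A * B)
  have hBW : RCLike.re ((B * Wᴴ)ᴴ * (B * Wᴴ)).trace ≤ RCLike.re (Bᴴ * B).trace := by
    have hcycle : ((B * Wᴴ)ᴴ * (B * Wᴴ)).trace = (B * (Wᴴ * W) * Bᴴ).trace := by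
      rw [conjTranspose_mul, conjTranspose_conjTranspose, trace_mul_comm]
      simp only [mul_assoc]
    rw [hcycle, trace_mul_comm Bᴴ]
    simpa only [mul_one, star_eq_conjTranspose] using
      re_trace_le_of_le (star_right_conjugate_le_conjugate hWW B)
  calc RCLike.re (CFC.abs (A * B)).trace = RCLike.re (A * (B * Wᴴ)).trace := by
        rw [← hWM, trace_mul_comm, mul_assoc]
    _ ≤ √(RCLike.re (A * Aᴴ).trace) * √(RCLike.re ((B * Wᴴ)ᴴ * (B * Wᴴ)).trace) :=
        re_trace_mul_le _ _
    _ ≤ _ := by rw [trace_mul_comm A]; gcongr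

end Matrix

lemma matrixAbs_eq_cfcAbs {n : ℕ} (C : Matrix (Fin n) (Fin n) ℂ) : matrixAbs C = CFC.abs C := by
  rw [cfcAbs_eq_cfc_sqrt, (isHermitian_conjTranspose_mul_self C).cfc_eq, IsHermitian.cfc,
    Unitary.conjStarAlgAut_apply]
  rfl

lemma traceNorm_eq_re_trace_cfcAbs {n : ℕ} (M : Matrix (Fin n) (Fin n) ℂ) :
    traceNorm M = (CFC.abs M).trace.re := by
  rw [← matrixAbs_eq_cfcAbs]
  rfl

/-- For Hermitian `C` and an orthogonal projection `P`,
`‖PC‖₁ = ‖P|C|‖₁ ≤ √(tr(P|C|)) √(tr|C|)`. -/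
theorem traceNorm_proj_mul_hermitian
    {n : ℕ} (C P : Matrix (Fin n) (Fin n) ℂ)
    (hC : C.IsHermitian) (hP2 : P * P = P) (hP : P.IsHermitian) :
    traceNorm (P * C) = traceNorm (P * matrixAbs C) ∧
    traceNorm (P * C) ≤
      Real.sqrt ((P * matrixAbs C).trace).re * Real.sqrt ((matrixAbs C).trace).re := by
  rw [matrixAbs_eq_cfcAbs, traceNorm_eq_re_trace_cfcAbs, traceNorm_eq_re_trace_cfcAbs]
  set X := CFC.abs C
  have hX : Xᴴ = X := (CFC.abs_nonneg C).isSelfAdjoint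
  have hXX : X * X = C * C := by rw [CFC.abs_mul_abs, star_eq_conjTranspose, hC.eq]
  have hPC : (CFC.abs (P * C)).trace = (CFC.abs (P * X)).trace := by
    apply trace_cfcAbs_eq_of_mul_conjTranspose_eq
    rw [conjTranspose_mul, conjTranspose_mul, hX, hC.eq, mul_assoc, mul_assoc, ← mul_assoc C,
      ← mul_assoc X, hXX]
  refine ⟨by rw [hPC], ?_⟩
  set R := CFC.sqrt X
  have hR : Rᴴ = R := (CFC.sqrt_nonneg X).isSelfAdjoint
  have hRR : R * R = X := CFC.sqrt_mul_sqrt_self X (CFC.abs_nonneg C)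
  have hPR : ((P * R)ᴴ * (P * R)).trace = (P * X).trace := by
    rw [conjTranspose_mul, hR, hP.eq, mul_assoc, ← mul_assoc P P, hP2, trace_mul_comm,
      mul_assoc, hRR]
  have holder := re_trace_cfcAbs_mul_le (P * R) R
  rw [mul_assoc P R R, hRR, hPR, hR, hRR] at holder
  simpa only [hPC, RCLike.re_to_complex] using holder
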